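/- arXiv:0804.2191 — 6 statements merged into one kernel-verified Lean document; each statement's English description precedes it below -/
import Mathlib

section
/- Let l > 0 and let Λ(l) be the triangular lattice of side l in the plane. For every R ≥ 0 and every lattice point p ∈ Λ(l), the number of points of Λ(l) contained in the closed disk of radius R centered at p equals n(R) = Σ_{i = -⌊R/(√3 l)⌋}^{⌊R/(√3 l)⌋} (1 + 2⌊√(R² − 3l²i²)/(3l)⌋) + 4 Σ_{i = 0}^{⌊R/(√3 l) − 1/2⌋} (1 + ⌊√(R² − 3l²(i + 1/2)²)/(3l) − 1/2⌋). -/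
/-!
A lattice point `m u + k v` is `((m + k) · 3l/2, (m - k) · √3 l/2)` and `m + k ≡ m - k (mod 2)`,
so `Λ(l)` is the union of the grids `{(3l (j + c), √3 l (i + c)) : i, j ∈ ℤ}` for `c = 0` and
`c = 1/2`. Translating, the disk may be centred at `0`. In each grid, row `i` meets the disk in the
integers `j` with `|j + c| ≤ t = √(R² - 3l²(i + c)²)/(3l)`, of which there are
`⌊t - c⌋ + ⌊t + c⌋ + 1`; for `c = 1/2` this is `2 (1 + ⌊t - 1/2⌋)`, and the rows are symmetric
under `i ↦ -1 - i`, whence the `4`.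
-/

/-- The point (a, b) of the Euclidean plane. -/
noncomputable def pt (a b : ℝ) : EuclideanSpace ℝ (Fin 2) :=
  (WithLp.equiv 2 (Fin 2 → ℝ)).symm ![a, b]

/-- The triangular lattice of side `l`: integer combinations of
`u = ((3/2)l, (√3/2)l)` and `v = ((3/2)l, −(√3/2)l)`. -/
noncomputable def triLattice (l : ℝ) : Set (EuclideanSpace ℝ (Fin 2)) :=
  { p | ∃ m k : ℤ, p = (m : ℝ) • pt (3 / 2 * l) (Real.sqrt 3 / 2 * l)
                     + (k : ℝ) • pt (3 / 2 * l) (-(Real.sqrt 3 / 2 * l)) }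

section Rows

variable {α β : Type*}

lemma biUnion_rows_eq {S : Set (α × β)} {I : Set β} (hI : ∀ q ∈ S, q.2 ∈ I) :
    ⋃ i ∈ I, (fun a => (a, i)) '' {a | (a, i) ∈ S} = S := by
  ext ⟨a, i⟩
  simp only [Set.mem_iUnion, Set.mem_image, Set.mem_ofPred_eq, Prod.mk.injEq, exists_prop]
  constructor
  · rintro ⟨i, -, a, ha, rfl, rfl⟩
    exact ha
  · exact fun h => ⟨i, hI _ h, a, h, rfl, rfl⟩

lemma pairwiseDisjoint_rows (S : Set (α × β)) (I : Set β) :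
    I.PairwiseDisjoint fun i => (fun a => (a, i)) '' {a | (a, i) ∈ S} := by
  intro i _ i' _ hii'
  simp only [Function.onFun, Set.disjoint_left, Set.mem_image]
  rintro _ ⟨a, -, rfl⟩ ⟨a', -, h⟩
  exact hii' (congrArg Prod.snd h).symm

lemma finite_of_finite_rows {S : Set (α × β)} (I : Finset β) (hI : ∀ q ∈ S, q.2 ∈ I)
    (hrow : ∀ i ∈ I, {a | (a, i) ∈ S}.Finite) : S.Finite := by
  rw [← biUnion_rows_eq hI]
  exact I.finite_toSet.biUnion fun i hi => (hrow i hi).image _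

lemma ncard_eq_sum_ncard_rows {S : Set (α × β)} (I : Finset β) (hI : ∀ q ∈ S, q.2 ∈ I)
    (hrow : ∀ i ∈ I, {a | (a, i) ∈ S}.Finite) :
    S.ncard = ∑ i ∈ I, {a | (a, i) ∈ S}.ncard := by
  calc S.ncard = (⋃ i ∈ (I : Set β), (fun a => (a, i)) '' {a | (a, i) ∈ S}).ncard := by
        rw [biUnion_rows_eq hI]
    _ = ∑ i ∈ I, {a | (a, i) ∈ S}.ncard := by
        rw [I.finite_toSet.ncard_biUnion (fun i hi => (hrow i hi).image _)
          (pairwiseDisjoint_rows S I), finsum_mem_coe_finset]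
        exact Finset.sum_congr rfl fun i _ =>
          Set.ncard_image_of_injective _ fun a a' h => (Prod.mk.inj h).1

end Rows

lemma setOf_abs_add_le_eq_Icc (c t : ℝ) :
    {j : ℤ | |(j : ℝ) + c| ≤ t} = Set.Icc (-⌊t + c⌋) ⌊t - c⌋ := by
  ext j
  simp only [Set.mem_ofPred_eq, Set.mem_Icc, abs_le, neg_le, Int.le_floor]
  push_cast
  constructor <;> rintro ⟨h₁, h₂⟩ <;> constructor <;> linarith

lemma ncard_setOf_abs_add_le (c : ℝ) {t : ℝ} (ht : 0 ≤ t) :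
    ({j : ℤ | |(j : ℝ) + c| ≤ t}.ncard : ℤ) = ⌊t - c⌋ + ⌊t + c⌋ + 1 := by
  have hsum : (-2 : ℝ) < ⌊t - c⌋ + ⌊t + c⌋ := by
    linarith [Int.sub_one_lt_floor (t - c), Int.sub_one_lt_floor (t + c)]
  have hsum' : -2 < ⌊t - c⌋ + ⌊t + c⌋ := by exact_mod_cast hsum
  rw [setOf_abs_add_le_eq_Icc, ← Finset.coe_Icc, Set.ncard_coe_finset, Int.card_Icc,
    Int.toNat_of_nonneg (by omega)]
  ring

lemma sq_mul_sq_le_iff_abs_le {a D x : ℝ} (ha : 0 < a) (hD : 0 ≤ D) :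
    a ^ 2 * x ^ 2 ≤ D ↔ |x| ≤ √D / a := by
  have habs : |x| * a = |x * a| := by rw [abs_mul, abs_of_pos ha]
  rw [le_div_iff₀ ha, habs, Real.le_sqrt (abs_nonneg _) hD, sq_abs, mul_pow, mul_comm]

lemma sum_Icc_neg_sub_one_eq_add_self {M : Type*} [AddCommMonoid M] (f : ℤ → M)
    (hf : ∀ i, f (-1 - i) = f i) (K : ℤ) :
    ∑ i ∈ Finset.Icc (-K - 1) K, f i = ∑ i ∈ Finset.Icc 0 K, f i + ∑ i ∈ Finset.Icc 0 K, f i := by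
  have hsplit : Finset.Icc (-K - 1) K = Finset.Icc (-K - 1) (-1) ∪ Finset.Icc 0 K := by
    ext i; simp only [Finset.mem_union, Finset.mem_Icc]; omega
  have hdisj : Disjoint (Finset.Icc (-K - 1) (-1)) (Finset.Icc 0 K) := by
    simp only [Finset.disjoint_left, Finset.mem_Icc]; omega
  have hreflect : ∑ i ∈ Finset.Icc (-K - 1) (-1), f i = ∑ i ∈ Finset.Icc 0 K, f i :=
    Finset.sum_nbij' (fun i => -1 - i) (fun i => -1 - i)
      (by simp only [Finset.mem_Icc]; omega) (by simp only [Finset.mem_Icc]; omega)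
      (by simp) (by simp) (fun i _ => (hf i).symm)
  rw [hsplit, Finset.sum_union hdisj, hreflect]

def ellipseLatticePoints (a b c R : ℝ) : Set (ℤ × ℤ) :=
  {q | a ^ 2 * ((q.1 : ℝ) + c) ^ 2 + b ^ 2 * ((q.2 : ℝ) + c) ^ 2 ≤ R ^ 2}

section Ellipse

variable {a b R : ℝ} (c : ℝ)

lemma mem_Icc_floor_iff (hb : 0 < b) (hR : 0 ≤ R) (i : ℤ) :
    i ∈ Finset.Icc (-⌊R / b + c⌋) ⌊R / b - c⌋ ↔ b ^ 2 * ((i : ℝ) + c) ^ 2 ≤ R ^ 2 := by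
  rw [← Finset.mem_coe, Finset.coe_Icc, ← setOf_abs_add_le_eq_Icc, Set.mem_ofPred_eq,
    sq_mul_sq_le_iff_abs_le hb (sq_nonneg R), Real.sqrt_sq hR]

lemma snd_mem_Icc_of_mem_ellipseLatticePoints (hb : 0 < b) (hR : 0 ≤ R) {q : ℤ × ℤ}
    (hq : q ∈ ellipseLatticePoints a b c R) : q.2 ∈ Finset.Icc (-⌊R / b + c⌋) ⌊R / b - c⌋ :=
  (mem_Icc_floor_iff c hb hR q.2).2 <| by
    have hrow_nonneg := mul_nonneg (sq_nonneg a) (sq_nonneg ((q.1 : ℝ) + c))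
    exact le_of_add_le_of_nonneg_right hq hrow_nonneg

lemma ellipseLatticePoints_row_eq (ha : 0 < a) {i : ℤ} (hi : b ^ 2 * ((i : ℝ) + c) ^ 2 ≤ R ^ 2) :
    {j | (j, i) ∈ ellipseLatticePoints a b c R}
      = {j : ℤ | |(j : ℝ) + c| ≤ √(R ^ 2 - b ^ 2 * ((i : ℝ) + c) ^ 2) / a} := by
  ext j
  rw [Set.mem_ofPred_eq, Set.mem_ofPred_eq, ← sq_mul_sq_le_iff_abs_le ha (sub_nonneg.2 hi),
    le_sub_iff_add_le]
  rfl

lemma ellipseLatticePoints_row_finite (ha : 0 < a) {i : ℤ}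
    (hi : b ^ 2 * ((i : ℝ) + c) ^ 2 ≤ R ^ 2) :
    {j | (j, i) ∈ ellipseLatticePoints a b c R}.Finite := by
  rw [ellipseLatticePoints_row_eq c ha hi, setOf_abs_add_le_eq_Icc]
  exact Set.finite_Icc _ _

lemma ellipseLatticePoints_finite (ha : 0 < a) (hb : 0 < b) (hR : 0 ≤ R) :
    (ellipseLatticePoints a b c R).Finite :=
  finite_of_finite_rows _ (fun _ => snd_mem_Icc_of_mem_ellipseLatticePoints c hb hR)
    fun i hi => ellipseLatticePoints_row_finite c ha ((mem_Icc_floor_iff c hb hR i).1 hi)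

theorem ncard_ellipseLatticePoints (ha : 0 < a) (hb : 0 < b) (hR : 0 ≤ R) :
    ((ellipseLatticePoints a b c R).ncard : ℤ) =
      ∑ i ∈ Finset.Icc (-⌊R / b + c⌋) ⌊R / b - c⌋,
        (⌊√(R ^ 2 - b ^ 2 * ((i : ℝ) + c) ^ 2) / a - c⌋
          + ⌊√(R ^ 2 - b ^ 2 * ((i : ℝ) + c) ^ 2) / a + c⌋ + 1) := by
  rw [ncard_eq_sum_ncard_rows _ (fun _ => snd_mem_Icc_of_mem_ellipseLatticePoints c hb hR)
    fun i hi => ellipseLatticePoints_row_finite c ha ((mem_Icc_floor_iff c hb hR i).1 hi)]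
  push_cast
  refine Finset.sum_congr rfl fun i hi => ?_
  rw [ellipseLatticePoints_row_eq c ha ((mem_Icc_floor_iff c hb hR i).1 hi),
    ncard_setOf_abs_add_le c (by positivity)]

theorem ncard_ellipseLatticePoints_zero (ha : 0 < a) (hb : 0 < b) (hR : 0 ≤ R) :
    ((ellipseLatticePoints a b 0 R).ncard : ℤ) =
      ∑ i ∈ Finset.Icc (-⌊R / b⌋) ⌊R / b⌋, (1 + 2 * ⌊√(R ^ 2 - b ^ 2 * (i : ℝ) ^ 2) / a⌋) := by
  rw [ncard_ellipseLatticePoints 0 ha hb hR]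
  simp only [add_zero, sub_zero]
  exact Finset.sum_congr rfl fun i _ => by ring

theorem ncard_ellipseLatticePoints_half (ha : 0 < a) (hb : 0 < b) (hR : 0 ≤ R) :
    ((ellipseLatticePoints a b (1 / 2) R).ncard : ℤ) =
      4 * ∑ i ∈ Finset.Icc 0 ⌊R / b - 1 / 2⌋,
        (1 + ⌊√(R ^ 2 - b ^ 2 * ((i : ℝ) + 1 / 2) ^ 2) / a - 1 / 2⌋) := by
  have hfloor (x : ℝ) : ⌊x + 1 / 2⌋ = ⌊x - 1 / 2⌋ + 1 := by
    rw [← Int.floor_add_one]; ring_nf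
  rw [ncard_ellipseLatticePoints (1 / 2) ha hb hR, hfloor, neg_add']
  set f : ℤ → ℤ := fun i => 2 * (1 + ⌊√(R ^ 2 - b ^ 2 * ((i : ℝ) + 1 / 2) ^ 2) / a - 1 / 2⌋)
  have hf : ∀ i, f (-1 - i) = f i := fun i => by
    simp only [f]; push_cast; ring_nf
  calc _ = ∑ i ∈ Finset.Icc (-⌊R / b - 1 / 2⌋ - 1) ⌊R / b - 1 / 2⌋, f i :=
        Finset.sum_congr rfl fun i _ => by rw [hfloor]; ring
    _ = _ := by
        rw [sum_Icc_neg_sub_one_eq_add_self f hf, ← two_mul, Finset.mul_sum, Finset.mul_sum]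
        exact Finset.sum_congr rfl fun i _ => by simp only [f]; ring

end Ellipse

lemma pt_inj {x y x' y' : ℝ} : pt x y = pt x' y' ↔ x = x' ∧ y = y' :=
  ⟨fun h => ⟨congrArg (· 0) h, congrArg (· 1) h⟩, fun ⟨hx, hy⟩ => hx ▸ hy ▸ rfl⟩

lemma norm_pt (x y : ℝ) : ‖pt x y‖ = √(x ^ 2 + y ^ 2) := by
  simp [EuclideanSpace.norm_eq, Fin.sum_univ_two, pt]

lemma smul_pt_add_smul_pt (m k x y x' y' : ℝ) :
    m • pt x y + k • pt x' y' = pt (m * x + k * x') (m * y + k * y') := by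
  ext i; fin_cases i <;> simp [pt]

lemma sub_mem_triLattice {l : ℝ} {x p : EuclideanSpace ℝ (Fin 2)} (hx : x ∈ triLattice l)
    (hp : p ∈ triLattice l) : x - p ∈ triLattice l := by
  obtain ⟨m, k, rfl⟩ := hx
  obtain ⟨m', k', rfl⟩ := hp
  exact ⟨m - m', k - k', by push_cast; module⟩

lemma add_mem_triLattice {l : ℝ} {x p : EuclideanSpace ℝ (Fin 2)} (hx : x ∈ triLattice l)
    (hp : p ∈ triLattice l) : x + p ∈ triLattice l := by
  obtain ⟨m, k, rfl⟩ := hx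
  obtain ⟨m', k', rfl⟩ := hp
  exact ⟨m + m', k + k', by push_cast; module⟩

noncomputable def gridPoint (l c : ℝ) (q : ℤ × ℤ) : EuclideanSpace ℝ (Fin 2) :=
  pt (3 * l * ((q.1 : ℝ) + c)) (√3 * l * ((q.2 : ℝ) + c))

lemma triLattice_eq_union (l : ℝ) :
    triLattice l = Set.range (gridPoint l 0) ∪ Set.range (gridPoint l (1 / 2)) := by
  ext x
  constructor
  · rintro ⟨m, k, rfl⟩
    rw [smul_pt_add_smul_pt]
    obtain ⟨j, hj | hj⟩ := Int.even_or_odd' (m + k)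
    · have hk : (k : ℝ) = 2 * j - m := by exact_mod_cast (by omega : k = 2 * j - m)
      refine Or.inl ⟨(j, m - j), pt_inj.2 ⟨?_, ?_⟩⟩ <;> (push_cast; rw [hk]; ring)
    · have hk : (k : ℝ) = 2 * j + 1 - m := by exact_mod_cast (by omega : k = 2 * j + 1 - m)
      refine Or.inr ⟨(j, m - j - 1), pt_inj.2 ⟨?_, ?_⟩⟩ <;> (push_cast; rw [hk]; ring)
  · rintro (⟨⟨j, i⟩, rfl⟩ | ⟨⟨j, i⟩, rfl⟩)
    · refine ⟨j + i, j - i, ?_⟩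
      rw [smul_pt_add_smul_pt, gridPoint, pt_inj]
      push_cast
      constructor <;> ring
    · refine ⟨j + i + 1, j - i, ?_⟩
      rw [smul_pt_add_smul_pt, gridPoint, pt_inj]
      push_cast
      constructor <;> ring

lemma gridPoint_injective {l : ℝ} (hl : 0 < l) (c : ℝ) : Function.Injective (gridPoint l c) := by
  rintro ⟨j, i⟩ ⟨j', i'⟩ h
  obtain ⟨hx, hy⟩ := pt_inj.1 h
  have hj : (j : ℝ) = j' := add_right_cancel (mul_left_cancel₀ (by positivity) hx)
  have hi : (i : ℝ) = i' := add_right_cancel (mul_left_cancel₀ (by positivity) hy)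
  exact Prod.ext (by exact_mod_cast hj) (by exact_mod_cast hi)

lemma disjoint_range_gridPoint {l : ℝ} (hl : 0 < l) :
    Disjoint (Set.range (gridPoint l 0)) (Set.range (gridPoint l (1 / 2))) := by
  rw [Set.disjoint_left]
  rintro _ ⟨⟨j, i⟩, rfl⟩ ⟨⟨j', i'⟩, h⟩
  have hx : (j' : ℝ) + 1 / 2 = j + 0 := mul_left_cancel₀ (by positivity) (pt_inj.1 h).1
  have hj : 2 * j' + 1 = 2 * j := by exact_mod_cast (by linarith : 2 * (j' : ℝ) + 1 = 2 * j)
  omega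

lemma gridPoint_preimage_closedBall (l c : ℝ) {R : ℝ} (hR : 0 ≤ R) :
    gridPoint l c ⁻¹' Metric.closedBall 0 R = ellipseLatticePoints (3 * l) (√3 * l) c R := by
  ext q
  simp only [Set.mem_preimage, Metric.mem_closedBall, dist_zero_right, gridPoint, norm_pt,
    Real.sqrt_le_left hR, ellipseLatticePoints, Set.mem_ofPred_eq, mul_pow]

lemma ncard_triLattice_inter_closedBall_zero {l R : ℝ} (hl : 0 < l) (hR : 0 ≤ R) :
    (triLattice l ∩ Metric.closedBall 0 R).ncard
      = (ellipseLatticePoints (3 * l) (√3 * l) 0 R).ncard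
        + (ellipseLatticePoints (3 * l) (√3 * l) (1 / 2) R).ncard := by
  have himage (c : ℝ) : gridPoint l c '' ellipseLatticePoints (3 * l) (√3 * l) c R
      = Set.range (gridPoint l c) ∩ Metric.closedBall 0 R := by
    rw [← gridPoint_preimage_closedBall l c hR, Set.image_preimage_eq_range_inter]
  have hfinite (c : ℝ) : (gridPoint l c '' ellipseLatticePoints (3 * l) (√3 * l) c R).Finite :=
    (ellipseLatticePoints_finite c (by positivity) (by positivity) hR).image _
  rw [triLattice_eq_union, Set.union_inter_distrib_right, ← himage, ← himage,
    Set.ncard_union_eq ((disjoint_range_gridPoint hl).mono (by simp [himage]) (by simp [himage]))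
      (hfinite 0) (hfinite (1 / 2)),
    Set.ncard_image_of_injective _ (gridPoint_injective hl 0),
    Set.ncard_image_of_injective _ (gridPoint_injective hl (1 / 2))]

lemma ncard_triLattice_inter_closedBall_eq {l R : ℝ} {p : EuclideanSpace ℝ (Fin 2)}
    (hp : p ∈ triLattice l) :
    (triLattice l ∩ Metric.closedBall p R).ncard
      = (triLattice l ∩ Metric.closedBall 0 R).ncard := by
  have htranslate : (· + p) '' (triLattice l ∩ Metric.closedBall 0 R)
      = triLattice l ∩ Metric.closedBall p R := by
    ext x
    constructor
    · rintro ⟨y, ⟨hy, hyR⟩, rfl⟩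
      exact ⟨add_mem_triLattice hy hp, by simpa [dist_eq_norm] using hyR⟩
    · rintro ⟨hx, hxR⟩
      refine ⟨x - p, ⟨sub_mem_triLattice hx hp, ?_⟩, sub_add_cancel x p⟩
      simpa [dist_eq_norm] using hxR
  rw [← htranslate, Set.ncard_image_of_injective _ (add_left_injective p)]

/-- The number of points of the triangular lattice of side `l > 0` in the closed disk of
radius `R ≥ 0` centered at any lattice point `p` equals
`n(R) = Σ_{i=-⌊R/(√3 l)⌋}^{⌊R/(√3 l)⌋} (1 + 2⌊√(R² − 3l²i²)/(3l)⌋)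
      + 4 Σ_{i=0}^{⌊R/(√3 l) − 1/2⌋} (1 + ⌊√(R² − 3l²(i+1/2)²)/(3l) − 1/2⌋)`. -/
theorem lattice_points_in_disk_count (l : ℝ) (hl : 0 < l) (R : ℝ) (hR : 0 ≤ R)
    (p : EuclideanSpace ℝ (Fin 2)) (hp : p ∈ triLattice l) :
    ((triLattice l ∩ Metric.closedBall p R).ncard : ℤ) =
      (∑ i ∈ Finset.Icc (-⌊R / (Real.sqrt 3 * l)⌋) ⌊R / (Real.sqrt 3 * l)⌋,
        (1 + 2 * ⌊Real.sqrt (R ^ 2 - 3 * l ^ 2 * (i : ℝ) ^ 2) / (3 * l)⌋)) +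
      4 * ∑ i ∈ Finset.Icc (0 : ℤ) ⌊R / (Real.sqrt 3 * l) - 1 / 2⌋,
        (1 + ⌊Real.sqrt (R ^ 2 - 3 * l ^ 2 * ((i : ℝ) + 1 / 2) ^ 2) / (3 * l) - 1 / 2⌋) := by
  have h3l : 0 < 3 * l := by positivity
  have hs3l : 0 < √3 * l := by positivity
  have hsq : (√3 * l) ^ 2 = 3 * l ^ 2 := by rw [mul_pow, Real.sq_sqrt (by norm_num)]
  rw [ncard_triLattice_inter_closedBall_eq hp, ncard_triLattice_inter_closedBall_zero hl hR,
    Nat.cast_add, ncard_ellipseLatticePoints_zero h3l hs3l hR,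
    ncard_ellipseLatticePoints_half h3l hs3l hR, hsq]
end

section
/- Let l > 0 and let Λ(l) be the triangular lattice of side l in the plane. The union over all p ∈ Λ(l) of the closed disks of radius l centered at p is all of ℝ²; equivalently, every point of the plane lies within Euclidean distance l of some lattice point. (This expresses that placing a sensor of sensing radius R_s = l at the center of each hexagon of side l yields a complete coverage of the plane.) -/
/-!
The lattice point `m • u + k • v` has coordinates `((m + k) · 3l/2, (m - k) · √3l/2)`.
Translating by multiples of `u` and of `u + v = (3l, 0)` moves any point into the
rectangle `[0, 3l] × [0, √3l/2]`, whose corners `(0, 0)`, `(3l, 0)` and the midpoint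
`(3l/2, √3l/2)` of its top edge are lattice points. The left half of the rectangle is cut
by the perpendicular bisector `3x + √3y = 3l` of `(0, 0)` and `(3l/2, √3l/2)` into two
pieces, each within distance `l` of its lattice point; the right half is its mirror image.
-/

lemma sq_add_sq_le_sq_of_three_mul_add_sqrt_three_mul_le {l x y : ℝ} (hx : 0 ≤ x)
    (hy : 0 ≤ y) (hy' : y ≤ √3 / 2 * l) (h : 3 * x + √3 * y ≤ 3 * l) :
    x ^ 2 + y ^ 2 ≤ l ^ 2 := by
  have h3 : √3 ^ 2 = 3 := Real.sq_sqrt (by norm_num)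
  nlinarith [mul_nonneg hx (by linarith : 0 ≤ 3 * l - 3 * x - √3 * y),
    mul_nonneg hy (by linarith : 0 ≤ √3 / 2 * l - y)]

lemma halfCell_covered {l x y : ℝ} (hx : 0 ≤ x) (hx' : x ≤ 3 / 2 * l) (hy : 0 ≤ y)
    (hy' : y ≤ √3 / 2 * l) :
    x ^ 2 + y ^ 2 ≤ l ^ 2 ∨ (3 / 2 * l - x) ^ 2 + (√3 / 2 * l - y) ^ 2 ≤ l ^ 2 := by
  have h3 : √3 ^ 2 = 3 := Real.sq_sqrt (by norm_num)
  rcases le_total (3 * x + √3 * y) (3 * l) with h | h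
  · exact .inl (sq_add_sq_le_sq_of_three_mul_add_sqrt_three_mul_le hx hy hy' h)
  · exact .inr (sq_add_sq_le_sq_of_three_mul_add_sqrt_three_mul_le (by linarith)
      (by linarith) (by linarith) (by nlinarith))

lemma cell_covered {l x y : ℝ} (hx : 0 ≤ x) (hx' : x ≤ 3 * l) (hy : 0 ≤ y)
    (hy' : y ≤ √3 / 2 * l) :
    x ^ 2 + y ^ 2 ≤ l ^ 2 ∨ (3 * l - x) ^ 2 + y ^ 2 ≤ l ^ 2 ∨
      (3 / 2 * l - x) ^ 2 + (√3 / 2 * l - y) ^ 2 ≤ l ^ 2 := by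
  rcases le_total x (3 / 2 * l) with h | h
  · rcases halfCell_covered hx h hy hy' with h | h
    exacts [.inl h, .inr (.inr h)]
  · rcases halfCell_covered (x := 3 * l - x) (by linarith) (by linarith) hy hy' with h | h
    · exact .inr (.inl h)
    · exact .inr (.inr (by linarith))

lemma exists_sq_add_sq_le_sq {l : ℝ} (hl : 0 < l) (a b : ℝ) :
    ∃ m k : ℤ, (a - (m + k) * (3 / 2 * l)) ^ 2 + (b - (m - k) * (√3 / 2 * l)) ^ 2 ≤ l ^ 2 := by
  obtain ⟨j, hj⟩ := (existsUnique_sub_zsmul_mem_Ico (by positivity : 0 < √3 / 2 * l) b 0).exists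
  obtain ⟨n, hn⟩ :=
    (existsUnique_sub_zsmul_mem_Ico (by positivity : 0 < 3 * l) (a - j * (3 / 2 * l)) 0).exists
  simp only [zsmul_eq_mul, zero_add, Set.mem_Ico] at hj hn
  rcases cell_covered hn.1 hn.2.le hj.1 hj.2.le with h | h | h
  · exact ⟨j + n, n, by push_cast; linarith⟩
  · exact ⟨j + n + 1, n + 1, by push_cast; linarith⟩
  · exact ⟨j + n + 1, n, by push_cast; linarith⟩

lemma pt_mem_triLattice (l : ℝ) (m k : ℤ) :
    pt ((m + k) * (3 / 2 * l)) ((m - k) * (√3 / 2 * l)) ∈ triLattice l := by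
  refine ⟨m, k, ?_⟩
  ext i
  fin_cases i <;> simp [pt] <;> ring

lemma dist_pt (p : EuclideanSpace ℝ (Fin 2)) (a b : ℝ) :
    dist p (pt a b) = √((p 0 - a) ^ 2 + (p 1 - b) ^ 2) := by
  simp [EuclideanSpace.dist_eq, Fin.sum_univ_two, pt, Real.dist_eq, sq_abs]

/-- The closed disks of radius `l` centered at the points of the triangular lattice of
side `l > 0` cover the whole plane: every point of the plane lies within Euclidean
distance `l` of some lattice point. -/
theorem triLattice_covers_plane (l : ℝ) (hl : 0 < l) :
    (⋃ p ∈ triLattice l, Metric.closedBall p l) = Set.univ := by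
  refine Set.eq_univ_of_forall fun p => ?_
  obtain ⟨m, k, h⟩ := exists_sq_add_sq_le_sq hl (p 0) (p 1)
  refine Set.mem_biUnion (pt_mem_triLattice l m k) (Metric.mem_closedBall.2 ?_)
  rw [dist_pt, Real.sqrt_le_left hl.le]
  exact h
end

section
/- Let l > 0, R_s ≥ 0, and let Λ(l) be the triangular lattice of side l in the plane. Every point p ∈ Λ(l) lies within Euclidean distance R_s of at least k lattice points of Λ(l) (counting p itself), where k = n(R_s) is the number of lattice points in the closed disk of radius R_s centered at a lattice point, given by n(R_s) = Σ_{i = -⌊R_s/(√3 l)⌋}^{⌊R_s/(√3 l)⌋} (1 + 2⌊√(R_s² − 3l²i²)/(3l)⌋) + 4 Σ_{i = 0}^{⌊R_s/(√3 l) − 1/2⌋} (1 + ⌊√(R_s² − 3l²(i + 1/2)²)/(3l) − 1/2⌋). (This expresses that a lattice deployment of sensors of sensing radius R_s achieves a grid coverage level of k = n(R_s).) -/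
/-!
Write `hexPt l (s, d)` for the point `((3/2) l s, (√3/2) l d)`. Then `Λ(l)` consists of the
points `hexPt l (s, d)` with `s + d` even (`m u + k v = hexPt l (m + k, m - k)`), and the
squared norm of `hexPt l (s, d)` is `9 l² (s/2)² + 3 l² (d/2)²`. Counting row by row: in an
even row `d = 2j` with `|j| ≤ R / (√3 l)` the points `s = 2a` with
`|a| ≤ √(R² − 3l²j²) / (3l)` lie in the disk, and in each of the two odd rows `d = ±(2i + 1)`
with `i + 1/2 ≤ R / (√3 l)` so do the points `s = 2a + 1` with
`|a + 1/2| ≤ √(R² − 3l²(i + 1/2)²) / (3l)`; the two sums of `n(R)` count exactly these.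
Since `Λ(l)` is an additive subgroup, the disk around any lattice point contains as many
lattice points as the disk around `0`, and since it is a `ℤ`-lattice that number is finite.
-/

open Finset Metric

lemma AddSubgroup.ncard_inter_closedBall_eq {E : Type*} [SeminormedAddCommGroup E]
    (L : AddSubgroup E) {p : E} (hp : p ∈ L) (R : ℝ) :
    ((L : Set E) ∩ closedBall p R).ncard = ((L : Set E) ∩ closedBall 0 R).ncard := by
  have : (L : Set E) ∩ closedBall p R = (p + ·) '' ((L : Set E) ∩ closedBall 0 R) := by
    ext q
    simp [Set.image_add_left, dist_eq_norm, neg_add_eq_sub, sub_eq_add_neg,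
      add_mem_cancel_right (neg_mem hp)]
  rw [this, Set.ncard_image_of_injective _ (add_right_injective p)]

lemma triLattice_eq_span (l : ℝ) :
    triLattice l = Submodule.span ℤ
      {pt (3 / 2 * l) (Real.sqrt 3 / 2 * l), pt (3 / 2 * l) (-(Real.sqrt 3 / 2 * l))} := by
  ext q
  simp only [triLattice, Set.mem_ofPred_eq, SetLike.mem_coe, Submodule.mem_span_pair,
    Int.cast_smul_eq_zsmul, eq_comm]

lemma linearIndependent_triLattice_generators {l : ℝ} (hl : l ≠ 0) :
    LinearIndependent ℝ
      ![pt (3 / 2 * l) (Real.sqrt 3 / 2 * l), pt (3 / 2 * l) (-(Real.sqrt 3 / 2 * l))] := by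
  refine LinearIndependent.pair_iff.2 fun s t h => ?_
  have h0 := congrArg (· 0) h
  have h1 := congrArg (· 1) h
  simp only [pt, PiLp.add_apply, PiLp.smul_apply, PiLp.zero_apply, WithLp.equiv_symm_apply,
    Matrix.cons_val_zero, Matrix.cons_val_one, smul_eq_mul] at h0 h1
  have hsum : s + t = 0 := (mul_eq_zero.1 (by linear_combination h0 :
    (s + t) * (3 / 2 * l) = 0)).resolve_right (mul_ne_zero (by norm_num) hl)
  have hdiff : s - t = 0 := (mul_eq_zero.1 (by linear_combination h1 :
    (s - t) * (Real.sqrt 3 / 2 * l) = 0)).resolve_right (mul_ne_zero (by positivity) hl)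
  constructor <;> linarith

lemma finite_triLattice_inter_closedBall {l : ℝ} (hl : l ≠ 0) (p : EuclideanSpace ℝ (Fin 2))
    (R : ℝ) : (triLattice l ∩ closedBall p R).Finite := by
  let b := basisOfLinearIndependentOfCardEqFinrank (linearIndependent_triLattice_generators hl)
    (by simp)
  have hb : Set.range b =
      {pt (3 / 2 * l) (Real.sqrt 3 / 2 * l), pt (3 / 2 * l) (-(Real.sqrt 3 / 2 * l))} := by
    rw [coe_basisOfLinearIndependentOfCardEqFinrank, Matrix.range_cons_cons_empty]
  rw [Set.inter_comm, triLattice_eq_span, ← hb]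
  exact ZSpan.setFinite_inter b isBounded_closedBall

lemma ncard_triLattice_inter_closedBall {l : ℝ} {p : EuclideanSpace ℝ (Fin 2)}
    (hp : p ∈ triLattice l) (R : ℝ) :
    (triLattice l ∩ closedBall p R).ncard = (triLattice l ∩ closedBall 0 R).ncard := by
  set L := Submodule.span ℤ
      {pt (3 / 2 * l) (Real.sqrt 3 / 2 * l), pt (3 / 2 * l) (-(Real.sqrt 3 / 2 * l))}
  have hL : triLattice l = (L.toAddSubgroup : Set (EuclideanSpace ℝ (Fin 2))) :=
    triLattice_eq_span l
  rw [hL] at hp ⊢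
  exact L.toAddSubgroup.ncard_inter_closedBall_eq hp R

noncomputable def hexPt (l : ℝ) (q : ℤ × ℤ) : EuclideanSpace ℝ (Fin 2) :=
  pt (3 * l * (q.1 / 2)) (Real.sqrt 3 * l * (q.2 / 2))

lemma smul_add_smul_eq_hexPt (l : ℝ) (m k : ℤ) :
    (m : ℝ) • pt (3 / 2 * l) (Real.sqrt 3 / 2 * l)
      + (k : ℝ) • pt (3 / 2 * l) (-(Real.sqrt 3 / 2 * l)) = hexPt l (m + k, m - k) := by
  ext i
  fin_cases i <;>
    simp only [pt, hexPt, WithLp.equiv_symm_apply, PiLp.add_apply, PiLp.smul_apply, smul_eq_mul,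
      Fin.zero_eta, Fin.mk_one, Matrix.cons_val_zero, Matrix.cons_val_one, Matrix.cons_val_fin_one,
      Int.cast_add, Int.cast_sub] <;>
    ring

lemma hexPt_mem_triLattice (l : ℝ) {q : ℤ × ℤ} (hq : Even (q.1 + q.2)) :
    hexPt l q ∈ triLattice l := by
  obtain ⟨c, hc⟩ := hq
  refine ⟨c, c - q.2, ?_⟩
  rw [smul_add_smul_eq_hexPt, show c + (c - q.2) = q.1 by omega, sub_sub_cancel]

lemma hexPt_injective {l : ℝ} (hl : l ≠ 0) : Function.Injective (hexPt l) := by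
  rintro ⟨s, d⟩ ⟨s', d'⟩ h
  have hs : s = s' := by simpa [hexPt, pt, hl] using congrArg (· 0) h
  have hd : d = d' := by simpa [hexPt, pt, hl] using congrArg (· 1) h
  rw [hs, hd]

lemma norm_pt_s4 (a b : ℝ) : ‖pt a b‖ = Real.sqrt (a ^ 2 + b ^ 2) := by
  simp [pt, EuclideanSpace.norm_eq, Fin.sum_univ_two]

lemma norm_pt_le {l R x y : ℝ} (hl : 0 < l) (hy : |y| ≤ R / (Real.sqrt 3 * l))
    (hx : |x| ≤ Real.sqrt (R ^ 2 - 3 * l ^ 2 * y ^ 2) / (3 * l)) :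
    ‖pt (3 * l * x) (Real.sqrt 3 * l * y)‖ ≤ R := by
  have hy' : |y| * (Real.sqrt 3 * l) ≤ R := (le_div_iff₀ (by positivity)).1 hy
  have hx' : |x| * (3 * l) ≤ Real.sqrt (R ^ 2 - 3 * l ^ 2 * y ^ 2) :=
    (le_div_iff₀ (by positivity)).1 hx
  have hR : 0 ≤ R := le_trans (by positivity) hy'
  have h3 : Real.sqrt 3 ^ 2 = 3 := Real.sq_sqrt (by norm_num)
  have hrow : 3 * l ^ 2 * y ^ 2 ≤ R ^ 2 := by
    have := pow_le_pow_left₀ (by positivity) hy' 2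
    rw [mul_pow, mul_pow, sq_abs, h3] at this
    linarith
  have hcol : (3 * l * x) ^ 2 ≤ R ^ 2 - 3 * l ^ 2 * y ^ 2 := by
    have := (Real.le_sqrt (by positivity) (by linarith)).1 hx'
    rwa [mul_pow, sq_abs, mul_comm, ← mul_pow] at this
  rw [norm_pt_s4, Real.sqrt_le_left hR]
  linear_combination hcol + (l * y) ^ 2 * h3

lemma abs_intCast_le_of_mem_Icc_floor {t : ℝ} {j : ℤ} (h : j ∈ Icc (-⌊t⌋) ⌊t⌋) :
    |(j : ℝ)| ≤ t := by
  rw [mem_Icc, neg_le, Int.le_floor, Int.le_floor] at h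
  exact abs_le.2 ⟨by push_cast at h; linarith, h.2⟩

lemma abs_intCast_add_half_le_of_mem_Icc_floor {t : ℝ} {a : ℤ}
    (h : a ∈ Icc (-⌊t - 1 / 2⌋ - 1) ⌊t - 1 / 2⌋) : |(a : ℝ) + 1 / 2| ≤ t := by
  rw [mem_Icc, sub_le_iff_le_add, neg_le, Int.le_floor, Int.le_floor] at h
  exact abs_le.2 ⟨by push_cast at h; linarith, by linarith⟩

noncomputable def evenRows (J : ℤ) (A : ℤ → ℤ) : Finset (ℤ × ℤ) :=
  (Icc (-J) J).biUnion fun j => (Icc (-A j) (A j)).image (2 * ·) ×ˢ {2 * j}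

noncomputable def oddRows (I : ℤ) (B : ℤ → ℤ) : Finset (ℤ × ℤ) :=
  (Icc 0 I).biUnion fun i =>
    (Icc (-B i - 1) (B i)).image (2 * · + 1) ×ˢ {2 * i + 1, -(2 * i + 1)}

lemma card_evenRows (J : ℤ) {A : ℤ → ℤ} (hA : ∀ j, 0 ≤ A j) :
    (#(evenRows J A) : ℤ) = ∑ j ∈ Icc (-J) J, (1 + 2 * A j) := by
  rw [evenRows, card_biUnion]
  · push_cast
    refine sum_congr rfl fun j _ => ?_
    rw [card_product, card_image_of_injective _ fun a b h => by simpa using h, Int.card_Icc,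
      card_singleton]
    have := hA j
    omega
  · intro j _ j' _ hjj'
    simp only [Function.onFun, disjoint_product, disjoint_singleton]
    omega

lemma card_oddRows (I : ℤ) {B : ℤ → ℤ} (hB : ∀ i, -1 ≤ B i) :
    (#(oddRows I B) : ℤ) = 4 * ∑ i ∈ Icc 0 I, (1 + B i) := by
  rw [oddRows, card_biUnion, mul_sum]
  · push_cast
    refine sum_congr rfl fun i hi => ?_
    have hi0 := (mem_Icc.1 hi).1
    rw [card_product, card_image_of_injective _ fun a b h => by simpa using h, Int.card_Icc,
      card_pair (by omega)]
    have := hB i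
    omega
  · intro i hi i' hi' hii'
    have := (mem_Icc.1 hi).1
    have := (mem_Icc.1 hi').1
    simp only [Function.onFun, disjoint_product]
    right
    simp only [disjoint_insert_left, disjoint_insert_right, disjoint_singleton, mem_insert,
      mem_singleton]
    omega

lemma disjoint_evenRows_oddRows (J I : ℤ) (A B : ℤ → ℤ) :
    Disjoint (evenRows J A) (oddRows I B) := by
  simp only [evenRows, oddRows, disjoint_left, mem_biUnion, mem_product, mem_image, mem_insert,
    mem_singleton]
  rintro ⟨s, d⟩ ⟨j, _, -, hd⟩ ⟨i, _, -, hd'⟩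
  omega

lemma even_add_of_mem_evenRows_union_oddRows {J I : ℤ} {A B : ℤ → ℤ} {q : ℤ × ℤ}
    (hq : q ∈ evenRows J A ∪ oddRows I B) : Even (q.1 + q.2) := by
  simp only [evenRows, oddRows, mem_union, mem_biUnion, mem_product, mem_image, mem_insert,
    mem_singleton] at hq
  rcases hq with ⟨j, -, ⟨a, -, hs⟩, hd⟩ | ⟨i, -, ⟨a, -, hs⟩, hd | hd⟩
  · exact ⟨a + j, by omega⟩
  · exact ⟨a + i + 1, by omega⟩
  · exact ⟨a - i, by omega⟩

lemma hexPt_mem_closedBall_of_mem_evenRows {l R : ℝ} (hl : 0 < l) {q : ℤ × ℤ}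
    (hq : q ∈ evenRows ⌊R / (Real.sqrt 3 * l)⌋
      fun j => ⌊Real.sqrt (R ^ 2 - 3 * l ^ 2 * (j : ℝ) ^ 2) / (3 * l)⌋) :
    hexPt l q ∈ closedBall 0 R := by
  simp only [evenRows, mem_biUnion, mem_product, mem_image, mem_singleton] at hq
  obtain ⟨j, hj, ⟨a, ha, hs⟩, hd⟩ := hq
  have hq : hexPt l q = pt (3 * l * a) (Real.sqrt 3 * l * j) := by
    simp only [hexPt, ← hs, hd]
    congr 1 <;> push_cast <;> ring
  rw [mem_closedBall_zero_iff, hq]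
  exact norm_pt_le hl (abs_intCast_le_of_mem_Icc_floor hj) (abs_intCast_le_of_mem_Icc_floor ha)

lemma hexPt_mem_closedBall_of_mem_oddRows {l R : ℝ} (hl : 0 < l) {q : ℤ × ℤ}
    (hq : q ∈ oddRows ⌊R / (Real.sqrt 3 * l) - 1 / 2⌋
      fun i => ⌊Real.sqrt (R ^ 2 - 3 * l ^ 2 * ((i : ℝ) + 1 / 2) ^ 2) / (3 * l) - 1 / 2⌋) :
    hexPt l q ∈ closedBall 0 R := by
  simp only [oddRows, mem_biUnion, mem_product, mem_image, mem_insert, mem_singleton] at hq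
  obtain ⟨i, hi, ⟨a, ha, hs⟩, hd⟩ := hq
  have hi' :
      i ∈ Icc (-⌊R / (Real.sqrt 3 * l) - 1 / 2⌋ - 1) ⌊R / (Real.sqrt 3 * l) - 1 / 2⌋ := by
    rw [mem_Icc] at hi ⊢
    omega
  have hd' : |(q.2 : ℝ) / 2| = |(i : ℝ) + 1 / 2| := by
    rcases hd with hd | hd <;> rw [hd]
    · congr 1; push_cast; ring
    · rw [← abs_neg]; congr 1; push_cast; ring
  have hq : hexPt l q = pt (3 * l * (a + 1 / 2)) (Real.sqrt 3 * l * (q.2 / 2)) := by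
    simp only [hexPt, ← hs]
    congr 1
    push_cast
    ring
  rw [mem_closedBall_zero_iff, hq]
  refine norm_pt_le hl (hd' ▸ abs_intCast_add_half_le_of_mem_Icc_floor hi') ?_
  rw [← sq_abs ((q.2 : ℝ) / 2), hd', sq_abs]
  exact abs_intCast_add_half_le_of_mem_Icc_floor ha

noncomputable def triDiskCount (l R : ℝ) : ℤ :=
  (∑ i ∈ Icc (-⌊R / (Real.sqrt 3 * l)⌋) ⌊R / (Real.sqrt 3 * l)⌋,
      (1 + 2 * ⌊Real.sqrt (R ^ 2 - 3 * l ^ 2 * (i : ℝ) ^ 2) / (3 * l)⌋)) +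
    4 * ∑ i ∈ Icc (0 : ℤ) ⌊R / (Real.sqrt 3 * l) - 1 / 2⌋,
      (1 + ⌊Real.sqrt (R ^ 2 - 3 * l ^ 2 * ((i : ℝ) + 1 / 2) ^ 2) / (3 * l) - 1 / 2⌋)

lemma triDiskCount_le_ncard {l : ℝ} (hl : 0 < l) (R : ℝ) :
    triDiskCount l R ≤ (triLattice l ∩ closedBall 0 R).ncard := by
  set A : ℤ → ℤ := fun j => ⌊Real.sqrt (R ^ 2 - 3 * l ^ 2 * (j : ℝ) ^ 2) / (3 * l)⌋
  set B : ℤ → ℤ := fun i =>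
    ⌊Real.sqrt (R ^ 2 - 3 * l ^ 2 * ((i : ℝ) + 1 / 2) ^ 2) / (3 * l) - 1 / 2⌋
  set F := evenRows ⌊R / (Real.sqrt 3 * l)⌋ A ∪ oddRows ⌊R / (Real.sqrt 3 * l) - 1 / 2⌋ B
  have hA : ∀ j, 0 ≤ A j := fun j => Int.floor_nonneg.2 (by positivity)
  have hB : ∀ i, -1 ≤ B i := fun i => Int.le_floor.2 <| by
    have : 0 ≤ Real.sqrt (R ^ 2 - 3 * l ^ 2 * ((i : ℝ) + 1 / 2) ^ 2) / (3 * l) := by positivity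
    push_cast
    linarith
  have hcard : triDiskCount l R = #F := by
    rw [card_union_of_disjoint (disjoint_evenRows_oddRows _ _ _ _), Nat.cast_add,
      card_evenRows _ hA, card_oddRows _ hB]
    rfl
  have hmaps : (F.image (hexPt l) : Set (EuclideanSpace ℝ (Fin 2))) ⊆
      triLattice l ∩ closedBall 0 R := by
    simp only [coe_image, Set.image_subset_iff]
    intro q hq
    refine ⟨hexPt_mem_triLattice l (even_add_of_mem_evenRows_union_oddRows hq), ?_⟩
    rcases mem_union.1 hq with hq | hq
    · exact hexPt_mem_closedBall_of_mem_evenRows hl hq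
    · exact hexPt_mem_closedBall_of_mem_oddRows hl hq
  have := Set.ncard_le_ncard hmaps (finite_triLattice_inter_closedBall hl.ne' 0 R)
  rw [Set.ncard_coe_finset, card_image_of_injective _ (hexPt_injective hl.ne')] at this
  rw [hcard]
  exact_mod_cast this

theorem triLattice_grid_coverage_level_general (l : ℝ) (hl : 0 < l) (Rs : ℝ)
    (p : EuclideanSpace ℝ (Fin 2)) (hp : p ∈ triLattice l) :
    (∑ i ∈ Finset.Icc (-⌊Rs / (Real.sqrt 3 * l)⌋) ⌊Rs / (Real.sqrt 3 * l)⌋,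
        (1 + 2 * ⌊Real.sqrt (Rs ^ 2 - 3 * l ^ 2 * (i : ℝ) ^ 2) / (3 * l)⌋)) +
      4 * ∑ i ∈ Finset.Icc (0 : ℤ) ⌊Rs / (Real.sqrt 3 * l) - 1 / 2⌋,
        (1 + ⌊Real.sqrt (Rs ^ 2 - 3 * l ^ 2 * ((i : ℝ) + 1 / 2) ^ 2) / (3 * l) - 1 / 2⌋) ≤
      ((triLattice l ∩ Metric.closedBall p Rs).ncard : ℤ) := by
  rw [ncard_triLattice_inter_closedBall hp]
  exact triDiskCount_le_ncard hl Rs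

/-- A lattice deployment of sensors of sensing radius `Rs` achieves a grid coverage level
of `k = n(Rs)`: every lattice point lies within Euclidean distance `Rs` of at least
`n(Rs)` lattice points (counting itself), where
`n(Rs) = Σ_{i=-⌊Rs/(√3 l)⌋}^{⌊Rs/(√3 l)⌋} (1 + 2⌊√(Rs² − 3l²i²)/(3l)⌋)
       + 4 Σ_{i=0}^{⌊Rs/(√3 l) − 1/2⌋} (1 + ⌊√(Rs² − 3l²(i+1/2)²)/(3l) − 1/2⌋)`. -/
theorem triLattice_grid_coverage_level (l : ℝ) (hl : 0 < l) (Rs : ℝ) (hRs : 0 ≤ Rs)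
    (p : EuclideanSpace ℝ (Fin 2)) (hp : p ∈ triLattice l) :
    (∑ i ∈ Finset.Icc (-⌊Rs / (Real.sqrt 3 * l)⌋) ⌊Rs / (Real.sqrt 3 * l)⌋,
        (1 + 2 * ⌊Real.sqrt (Rs ^ 2 - 3 * l ^ 2 * (i : ℝ) ^ 2) / (3 * l)⌋)) +
      4 * ∑ i ∈ Finset.Icc (0 : ℤ) ⌊Rs / (Real.sqrt 3 * l) - 1 / 2⌋,
        (1 + ⌊Real.sqrt (Rs ^ 2 - 3 * l ^ 2 * ((i : ℝ) + 1 / 2) ^ 2) / (3 * l) - 1 / 2⌋) ≤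
      ((triLattice l ∩ Metric.closedBall p Rs).ncard : ℤ) :=
  triLattice_grid_coverage_level_general l hl Rs p hp
end

section
/- Let s, q ∈ ℝ² and R > 0 with 0 < ‖q − s‖ ≤ R, and let ρ denote the rotation by angle π/3 about s. Then for every point x with ‖x − s‖ = R, at least two of the six points ρ^k(q), k = 0, 1, …, 5, satisfy ‖x − ρ^k(q)‖ ≤ R. (Six sensors at distance at most R from s, placed symmetrically under rotations by π/3 about s, jointly cover every point of the sensing circle of s at least twice.) -/
/-- Rotation of the plane by angle `θ` about the origin, the linear isometry with matrix
`[[cos θ, −sin θ], [sin θ, cos θ]]`. -/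
noncomputable def rot (θ : ℝ) (p : EuclideanSpace ℝ (Fin 2)) : EuclideanSpace ℝ (Fin 2) :=
  pt (Real.cos θ * p 0 - Real.sin θ * p 1) (Real.sin θ * p 0 + Real.cos θ * p 1)

/-- Rotation of the plane by angle `θ` about the point `s`. -/
noncomputable def rotAbout (s : EuclideanSpace ℝ (Fin 2)) (θ : ℝ)
    (p : EuclideanSpace ℝ (Fin 2)) : EuclideanSpace ℝ (Fin 2) :=
  s + rot θ (p - s)

open Real

@[simp] lemma pt_apply_zero (a b : ℝ) : pt a b 0 = a := rfl

@[simp] lemma pt_apply_one (a b : ℝ) : pt a b 1 = b := rfl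

lemma rot_zero (p : EuclideanSpace ℝ (Fin 2)) : rot 0 p = p := by
  ext i; fin_cases i <;> simp [rot]

lemma rot_rot (θ φ : ℝ) (p : EuclideanSpace ℝ (Fin 2)) : rot θ (rot φ p) = rot (θ + φ) p := by
  ext i; fin_cases i <;> simp [rot, cos_add, sin_add] <;> ring

lemma rotAbout_iterate (s : EuclideanSpace ℝ (Fin 2)) (θ : ℝ) (q : EuclideanSpace ℝ (Fin 2))
    (n : ℕ) : (rotAbout s θ)^[n] q = s + rot (n * θ) (q - s) := by
  induction n with
  | zero => simp [rot_zero]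
  | succ n ih =>
    rw [Function.iterate_succ_apply', ih, rotAbout, add_sub_cancel_left, rot_rot]
    push_cast
    ring_nf

lemma EuclideanSpace.sq_norm_fin_two (p : EuclideanSpace ℝ (Fin 2)) :
    ‖p‖ ^ 2 = p 0 ^ 2 + p 1 ^ 2 := by
  simp [EuclideanSpace.norm_sq_eq, Fin.sum_univ_two]

lemma exists_sq_norm_sub_rot (u v : EuclideanSpace ℝ (Fin 2)) : ∃ α : ℝ, ∀ θ : ℝ,
    ‖u - rot θ v‖ ^ 2 = ‖u‖ ^ 2 + ‖v‖ ^ 2 - 2 * (‖u‖ * ‖v‖) * cos (α - θ) := by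
  set z : ℂ := ⟨u 0 * v 0 + u 1 * v 1, u 1 * v 0 - u 0 * v 1⟩
  have hz : ‖z‖ = ‖u‖ * ‖v‖ := by
    rw [← sq_eq_sq₀ (norm_nonneg _) (by positivity), mul_pow, Complex.sq_norm,
      Complex.normSq_mk, EuclideanSpace.sq_norm_fin_two, EuclideanSpace.sq_norm_fin_two]
    ring
  refine ⟨z.arg, fun θ => ?_⟩
  have hre : ‖z‖ * cos z.arg = u 0 * v 0 + u 1 * v 1 := Complex.norm_mul_cos_arg z
  have him : ‖z‖ * sin z.arg = u 1 * v 0 - u 0 * v 1 := Complex.norm_mul_sin_arg z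
  rw [← hz, cos_sub, EuclideanSpace.sq_norm_fin_two, EuclideanSpace.sq_norm_fin_two,
    EuclideanSpace.sq_norm_fin_two]
  simp only [PiLp.sub_apply, rot, pt_apply_zero, pt_apply_one]
  linear_combination (v 0 ^ 2 + v 1 ^ 2) * sin_sq_add_cos_sq θ + 2 * cos θ * hre
    + 2 * sin θ * him

lemma one_half_le_cos_of_abs_le {t : ℝ} (ht : |t| ≤ π / 3) : 1 / 2 ≤ cos t := by
  rw [← cos_abs t, ← cos_pi_div_three]
  exact cos_le_cos_of_nonneg_of_le_pi (abs_nonneg t) (by linarith [pi_pos]) ht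

lemma exists_forall_norm_sub_rot_le {u v : EuclideanSpace ℝ (Fin 2)} (h : ‖v‖ ≤ ‖u‖) :
    ∃ α : ℝ, ∀ θ : ℝ, 1 / 2 ≤ cos (α - θ) → ‖u - rot θ v‖ ≤ ‖u‖ := by
  obtain ⟨α, hα⟩ := exists_sq_norm_sub_rot u v
  refine ⟨α, fun θ hθ => (sq_le_sq₀ (norm_nonneg _) (norm_nonneg _)).1 ?_⟩
  rw [hα θ]
  nlinarith [mul_nonneg (norm_nonneg u) (norm_nonneg v), norm_nonneg v]

open scoped Fin.IntCast in
lemma cos_sub_val_intCast_mul_pi_div_three (α : ℝ) (m : ℤ) :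
    cos (α - ((m : Fin 6) : ℕ) * (π / 3)) = cos (α - m * (π / 3)) := by
  have hval : (((m : Fin 6) : ℕ) : ℝ) = m - 6 * (m / 6 : ℤ) := by
    have : (((m : Fin 6) : ℕ) : ℤ) = m - 6 * (m / 6) := by
      rw [Fin.val_intCast]; omega
    exact_mod_cast this
  rw [hval, ← cos_sub_int_mul_two_pi (α - m * (π / 3)) (-(m / 6))]
  congr 1
  push_cast
  ring

open scoped Fin.IntCast in
lemma two_le_ncard_one_half_le_cos_sub (α : ℝ) :
    2 ≤ {k : Fin 6 | 1 / 2 ≤ cos (α - (k : ℕ) * (π / 3))}.ncard := by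
  set m : ℤ := ⌊α / (π / 3)⌋
  have hpi : 0 < π / 3 := by positivity
  have hlo : m * (π / 3) ≤ α := (le_div_iff₀ hpi).1 (Int.floor_le _)
  have hhi : α < (m + 1) * (π / 3) := (div_lt_iff₀ hpi).1 (Int.lt_floor_add_one _)
  have hne : (m : Fin 6) ≠ ((m + 1 : ℤ) : Fin 6) := by
    rw [ne_eq, Fin.ext_iff, Fin.val_intCast, Fin.val_intCast]; omega
  refine (Set.ncard_pair hne).symm.le.trans <|
    Set.ncard_le_ncard (Set.insert_subset ?_ (Set.singleton_subset_iff.2 ?_)) (Set.toFinite _)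
  all_goals
    simp only [Set.mem_ofPred_eq, cos_sub_val_intCast_mul_pi_div_three]
    push_cast
    exact one_half_le_cos_of_abs_le (abs_le.2 ⟨by linarith, by linarith⟩)

theorem inner_crown_double_perimeter_coverage_general (s q : EuclideanSpace ℝ (Fin 2)) (R : ℝ)
    (hqR : ‖q - s‖ ≤ R)
    (x : EuclideanSpace ℝ (Fin 2)) (hx : ‖x - s‖ = R) :
    2 ≤ {k : Fin 6 | ‖x - (rotAbout s (Real.pi / 3))^[(k : ℕ)] q‖ ≤ R}.ncard := by
  obtain ⟨α, hα⟩ := exists_forall_norm_sub_rot_le (u := x - s) (v := q - s) (hx ▸ hqR)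
  refine (two_le_ncard_one_half_le_cos_sub α).trans
    (Set.ncard_le_ncard (fun k hk => ?_) (Set.toFinite _))
  rw [Set.mem_ofPred_eq, rotAbout_iterate, ← sub_sub, ← hx]
  exact hα _ hk

/-- Six sensors of sensing radius `R` at distance at most `R` from `s` (and distinct
from `s`), placed symmetrically under rotations by `π/3` about `s`, jointly cover every
point of the sensing circle of `s` at least twice: for every `x` with `‖x − s‖ = R`,
at least two of the six points `ρ^k(q)`, `k = 0, …, 5`, are within distance `R` of `x`. -/
theorem inner_crown_double_perimeter_coverage (s q : EuclideanSpace ℝ (Fin 2)) (R : ℝ)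
    (hR : 0 < R) (hq : 0 < ‖q - s‖) (hqR : ‖q - s‖ ≤ R)
    (x : EuclideanSpace ℝ (Fin 2)) (hx : ‖x - s‖ = R) :
    2 ≤ {k : Fin 6 | ‖x - (rotAbout s (Real.pi / 3))^[(k : ℕ)] q‖ ≤ R}.ncard :=
  inner_crown_double_perimeter_coverage_general s q R hqR x hx
end

section
/- Let s, q ∈ ℝ² and R > 0 with √3·R < ‖q − s‖ ≤ 2R. If x and y are two points on the circle of radius R centered at s (‖x − s‖ = ‖y − s‖ = R) that both satisfy ‖x − q‖ ≤ R and ‖y − q‖ ≤ R, then ‖x − y‖ < R. (A sensor at distance strictly greater than √3 R from s covers only an arc of the sensing circle of s of amplitude less than π/3, so any two covered points of the circle are at distance less than the chord subtended by an angle π/3, namely R.) -/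
/-!
Translate so that `s = 0`. A point `u` of the circle `‖u‖ = R` within distance `R` of `w = q - s`
satisfies `⟪u, w⟫ ≥ ‖w‖² / 2`, so `cos ∠(u, w) ≥ ‖w‖ / 2R > √3 / 2`, i.e. `∠(u, w) < π / 6`.
By the triangle inequality for angles two such points subtend an angle `< π / 3` at the centre,
and the law of cosines turns this into a chord shorter than `R`.
-/

open Real InnerProductGeometry
open scoped RealInnerProductSpace

variable {V : Type*} [NormedAddCommGroup V] [InnerProductSpace ℝ V]

theorem angle_lt_pi_div_six_of_norm_sub_le {u w : V} {R : ℝ} (hu : ‖u‖ = R)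
    (huw : ‖u - w‖ ≤ R) (hw : √3 * R < ‖w‖) : angle u w < π / 6 := by
  have hw_le : ‖w‖ ≤ 2 * R := by
    have := norm_sub_le u (u - w)
    rw [sub_sub_cancel] at this
    linarith
  have hsqrt3 : √3 < 2 := by
    rw [show (2 : ℝ) = √(2 ^ 2) by simp]
    exact Real.sqrt_lt_sqrt (by norm_num) (by norm_num)
  have hR : 0 < R := by nlinarith
  have hinner : ‖w‖ ^ 2 / 2 ≤ ⟪u, w⟫ := by
    have hsq : ‖u - w‖ ^ 2 ≤ R ^ 2 := pow_le_pow_left₀ (norm_nonneg _) huw 2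
    rw [norm_sub_sq_real, hu] at hsq
    linarith
  have hcos : √3 / 2 < cos (angle u w) := by
    have hRw : 0 < R * ‖w‖ := mul_pos hR (lt_trans (by positivity) hw)
    refine lt_of_mul_lt_mul_right ?_ hRw.le
    rw [← hu, cos_angle_mul_norm_mul_norm, hu]
    nlinarith
  by_contra! h
  have := cos_le_cos_of_nonneg_of_le_pi (by positivity) (angle_le_pi u w) h
  rw [cos_pi_div_six] at this
  linarith

theorem norm_sub_lt_of_angle_lt_pi_div_three {u v : V} (h : ‖u‖ = ‖v‖)
    (hθ : angle u v < π / 3) : ‖u - v‖ < ‖u‖ := by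
  have hu : u ≠ 0 := by
    rintro rfl
    rw [angle_zero_left] at hθ
    linarith [pi_pos]
  have hcos : 1 / 2 < cos (angle u v) := by
    rw [← cos_pi_div_three]
    exact cos_lt_cos_of_nonneg_of_le_pi (angle_nonneg u v) (by linarith [pi_pos]) hθ
  have hpos : 0 < ‖u‖ := norm_pos_iff.mpr hu
  have hsq : ‖u - v‖ * ‖u - v‖ < ‖u‖ * ‖u‖ := by
    rw [norm_sub_sq_eq_norm_sq_add_norm_sq_sub_two_mul_norm_mul_norm_mul_cos_angle, ← h]
    nlinarith [mul_pos hpos hpos]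
  exact lt_of_mul_self_lt_mul_self₀ hpos.le hsq

theorem far_sensor_covers_short_arc_general (s q : EuclideanSpace ℝ (Fin 2)) (R : ℝ)
    (hq : Real.sqrt 3 * R < ‖q - s‖)
    (x y : EuclideanSpace ℝ (Fin 2)) (hx : ‖x - s‖ = R) (hy : ‖y - s‖ = R)
    (hxq : ‖x - q‖ ≤ R) (hyq : ‖y - q‖ ≤ R) :
    ‖x - y‖ < R := by
  have hxθ : angle (x - s) (q - s) < π / 6 :=
    angle_lt_pi_div_six_of_norm_sub_le hx (by rwa [sub_sub_sub_cancel_right]) hq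
  have hyθ : angle (q - s) (y - s) < π / 6 := by
    rw [angle_comm]
    exact angle_lt_pi_div_six_of_norm_sub_le hy (by rwa [sub_sub_sub_cancel_right]) hq
  have hθ : angle (x - s) (y - s) < π / 3 := by
    linarith [angle_le_angle_add_angle (x - s) (q - s) (y - s)]
  simpa [hx] using norm_sub_lt_of_angle_lt_pi_div_three (hx.trans hy.symm) hθ

/-- A sensor at distance strictly greater than `√3 R` (and at most `2R`) from `s` covers
only an arc of the sensing circle of `s` of amplitude less than `π/3`: any two points of
the circle of radius `R` centered at `s` that are both within distance `R` of `q` are at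
distance less than `R` from each other. -/
theorem far_sensor_covers_short_arc (s q : EuclideanSpace ℝ (Fin 2)) (R : ℝ) (hR : 0 < R)
    (hq : Real.sqrt 3 * R < ‖q - s‖) (hq2 : ‖q - s‖ ≤ 2 * R)
    (x y : EuclideanSpace ℝ (Fin 2)) (hx : ‖x - s‖ = R) (hy : ‖y - s‖ = R)
    (hxq : ‖x - q‖ ≤ R) (hyq : ‖y - q‖ ≤ R) :
    ‖x - y‖ < R :=
  far_sensor_covers_short_arc_general s q R hq x y hx hy hxq hyq
end

section
/- Let n ∈ ℕ, let id : Fin n → ℕ, and let s, s' : Fin n → ℕ be two network states. Suppose there are indices x ≠ y such that s'(x) = s(x) − 1, s'(y) = s(y) + 1, s'(i) = s(i) for all i ∉ {x, y}, and the Moving Condition holds, i.e. either s(x) > s(y) + 1, or s(x) = s(y) + 1 and id(x) > id(y). Then f(s') is strictly smaller than f(s) in the lexicographic order on ℕ × ℕ, where f(t) = (Σ_{i} t(i)², Σ_{i} t(i)·id(i)). -/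
/-- The potential function on network states:
`f(t) = (Σ_i t(i)², Σ_i t(i)·id(i))`, compared in the lexicographic order on `ℕ × ℕ`. -/
def potential {n : ℕ} (idf : Fin n → ℕ) (s : Fin n → ℕ) : ℕ × ℕ :=
  (∑ i, s i ^ 2, ∑ i, s i * idf i)

/-!
Moving one sensor from `x` to `y` changes `Σ t(i)²` by `2 (s y + 1 - s x)` and `Σ t(i)·id(i)` by
`id y - id x`. Under the Moving Condition the first change is negative, or it is zero and the
second one is negative.
-/

theorem Finset.sum_add_add_eq_of_eq_off_pair {ι M : Type*} [Fintype ι] [DecidableEq ι]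
    [AddCommMonoid M] {g g' : ι → M} {x y : ι} (hxy : x ≠ y)
    (h : ∀ i, i ≠ x → i ≠ y → g' i = g i) :
    ∑ i, g' i + (g x + g y) = ∑ i, g i + (g' x + g' y) := by
  have hcompl : ∑ i ∈ {x, y}ᶜ, g' i = ∑ i ∈ {x, y}ᶜ, g i :=
    Finset.sum_congr rfl fun i hi => by
      simp only [Finset.mem_compl, Finset.mem_insert, Finset.mem_singleton, not_or] at hi
      exact h i hi.1 hi.2
  rw [← Finset.sum_compl_add_sum {x, y} g', ← Finset.sum_compl_add_sum {x, y} g, hcompl,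
    Finset.sum_pair hxy, Finset.sum_pair hxy]
  abel

/-- `source` is phrased without truncated subtraction, so that it also records `0 < s x`. -/
structure IsTransfer {ι : Type*} (s s' : ι → ℕ) (x y : ι) : Prop where
  ne : x ≠ y
  source : s' x + 1 = s x
  target : s' y = s y + 1
  eq_of_ne : ∀ i, i ≠ x → i ≠ y → s' i = s i

namespace IsTransfer

variable {ι : Type*} [Fintype ι] [DecidableEq ι] {s s' : ι → ℕ} {x y : ι}

theorem sum_sq_add (h : IsTransfer s s' x y) :
    ∑ i, s' i ^ 2 + 2 * s x = ∑ i, s i ^ 2 + 2 * (s y + 1) := by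
  have key := Finset.sum_add_add_eq_of_eq_off_pair (g := fun i => s i ^ 2)
    (g' := fun i => s' i ^ 2) h.ne fun i hix hiy => by rw [h.eq_of_ne i hix hiy]
  simp only [← h.source, h.target] at key ⊢
  linarith

theorem sum_mul_add (h : IsTransfer s s' x y) (w : ι → ℕ) :
    ∑ i, s' i * w i + w x = ∑ i, s i * w i + w y := by
  have key := Finset.sum_add_add_eq_of_eq_off_pair (g := fun i => s i * w i)
    (g' := fun i => s' i * w i) h.ne fun i hix hiy => by rw [h.eq_of_ne i hix hiy]
  simp only [← h.source, h.target] at key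
  linarith

end IsTransfer

/-- A state change moving one sensor from hexagon `x` to hexagon `y ≠ x`, allowed by the
Moving Condition `(s x > s y + 1) ∨ (s x = s y + 1 ∧ id x > id y)`, strictly decreases
the potential `f(t) = (Σ_i t(i)², Σ_i t(i)·id(i))` in the lexicographic order. -/
theorem potential_decreases {n : ℕ} (idf : Fin n → ℕ) (s s' : Fin n → ℕ) (x y : Fin n)
    (hxy : x ≠ y)
    (hx : s' x = s x - 1) (hy : s' y = s y + 1)
    (hother : ∀ i, i ≠ x → i ≠ y → s' i = s i)
    (hmc : s x > s y + 1 ∨ (s x = s y + 1 ∧ idf x > idf y)) :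
    Prod.Lex (· < ·) (· < ·) (potential idf s') (potential idf s) := by
  have htr : IsTransfer s s' x y := ⟨hxy, by omega, hy, hother⟩
  have hsq := htr.sum_sq_add
  have hid := htr.sum_mul_add idf
  rw [Prod.lex_def]
  simp only [potential]
  omega
end
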